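/- Inside SL₂(ℚ[t,t⁻¹]), one has the equality of subgroups SL₂(ℤ[t]) ∩ Γ(ℚ) = i₂(SL₂(ℤ[t])) ∩ Γ(ℚ), where SL₂(ℤ[t]) and Γ(ℚ) ⊆ SL₂(ℚ[t]) are viewed as subgroups of SL₂(ℚ[t,t⁻¹]) via the evident inclusions; moreover this common subgroup equals the set of matrices in SL₂(ℤ[t]) whose lower-left entry is divisible by t. -/

import Mathlib

/-!
Conjugation by `diag(1, t)` multiplies the upper-right entry by `t⁻¹` and the lower-left entry
by `t`, so `i₂ A` is the image of `B ∈ SL₂(ℚ[t])` exactly when `A = (a, t b; c, d)` and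
`B = (a, b; t c, d)`. Hence `(a, b; t c, d) ↦ (a, t b; c, d)` (`conjP`) puts every matrix of
`SL₂(ℤ[t])` with `t ∣ c` into `i₂(SL₂(ℤ[t]))`. Conversely, if `A` is integral then so is `B`
(its upper-right entry is the integral polynomial `(t b) / t`), and as `ℤ[t] → ℚ[t]` is
injective the condition `det = 1` lifts, so `B ∈ SL₂(ℤ[t])`. Finally `t` divides an integral
polynomial in `ℚ[t]` iff it does in `ℤ[t]`: both say that the constant term vanishes.
-/

open Matrix MatrixGroups Polynomial LaurentPolynomial

namespace Paper

variable (R : Type) [CommRing R]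

lemma entry00 (A B : SL(2, R)) : (↑(A * B) : Matrix (Fin 2) (Fin 2) R) 0 0
    = A.1 0 0 * B.1 0 0 + A.1 0 1 * B.1 1 0 := by
  simp [Matrix.SpecialLinearGroup.coe_mul, Matrix.mul_apply, Fin.sum_univ_two]

lemma entry01 (A B : SL(2, R)) : (↑(A * B) : Matrix (Fin 2) (Fin 2) R) 0 1
    = A.1 0 0 * B.1 0 1 + A.1 0 1 * B.1 1 1 := by
  simp [Matrix.SpecialLinearGroup.coe_mul, Matrix.mul_apply, Fin.sum_univ_two]

lemma entry10 (A B : SL(2, R)) : (↑(A * B) : Matrix (Fin 2) (Fin 2) R) 1 0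
    = A.1 1 0 * B.1 0 0 + A.1 1 1 * B.1 1 0 := by
  simp [Matrix.SpecialLinearGroup.coe_mul, Matrix.mul_apply, Fin.sum_univ_two]

lemma entry11 (A B : SL(2, R)) : (↑(A * B) : Matrix (Fin 2) (Fin 2) R) 1 1
    = A.1 1 0 * B.1 0 1 + A.1 1 1 * B.1 1 1 := by
  simp [Matrix.SpecialLinearGroup.coe_mul, Matrix.mul_apply, Fin.sum_univ_two]

/-- The subgroup of upper triangular matrices in `SL₂(R)`. -/
def Bsub : Subgroup (Matrix.SpecialLinearGroup (Fin 2) R) where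
  carrier := {A | A.1 1 0 = 0}
  one_mem' := by
    show ((1 : SL(2, R)) : Matrix (Fin 2) (Fin 2) R) 1 0 = 0
    simp [Matrix.SpecialLinearGroup.coe_one, Matrix.one_apply]
  mul_mem' {A B} hA hB := by
    show (↑(A * B) : Matrix (Fin 2) (Fin 2) R) 1 0 = 0
    rw [entry10]
    simp only [Set.mem_setOf_eq] at hA hB
    rw [hA, hB]; ring
  inv_mem' {A} hA := by
    show (↑(A⁻¹) : Matrix (Fin 2) (Fin 2) R) 1 0 = 0
    rw [Matrix.SpecialLinearGroup.SL2_inv_expl A]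
    simp only [Set.mem_setOf_eq] at hA
    simp [hA]

/-- The subgroup of matrices in `SL₂(R[t])` whose lower-left entry is divisible by `t`. -/
def Psub : Subgroup (Matrix.SpecialLinearGroup (Fin 2) (Polynomial R)) where
  carrier := {A | (X : R[X]) ∣ A.1 1 0}
  one_mem' := by
    show (X : R[X]) ∣ ((1 : SL(2, R[X])) : Matrix (Fin 2) (Fin 2) R[X]) 1 0
    simp [Matrix.SpecialLinearGroup.coe_one, Matrix.one_apply]
  mul_mem' {A B} hA hB := by
    show (X : R[X]) ∣ (↑(A * B) : Matrix (Fin 2) (Fin 2) R[X]) 1 0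
    rw [entry10]
    exact dvd_add (hA.mul_right _) (hB.mul_left _)
  inv_mem' {A} hA := by
    show (X : R[X]) ∣ (↑(A⁻¹) : Matrix (Fin 2) (Fin 2) R[X]) 1 0
    rw [Matrix.SpecialLinearGroup.SL2_inv_expl A]
    simp only [Set.mem_setOf_eq] at hA
    simpa using hA.neg_right

/-- The elementary matrix `(1 r; 0 1)`. -/
def elUp (r : R) : SL(2, R) :=
  ⟨!![1, r; 0, 1], by simp [Matrix.det_fin_two_of]⟩

/-- The elementary matrix `(1 0; r 1)`. -/
def elLow (r : R) : SL(2, R) :=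
  ⟨!![1, 0; r, 1], by simp [Matrix.det_fin_two_of]⟩

/-- The subgroup `E₂(R)` of `SL₂(R)` generated by the elementary matrices. -/
def Esub : Subgroup (Matrix.SpecialLinearGroup (Fin 2) R) :=
  Subgroup.closure {A | (∃ r : R, A = elUp R r) ∨ (∃ r : R, A = elLow R r)}

variable {R}

lemma divX_X_mul (p : R[X]) : (X * p).divX = p := by
  ext n
  rw [Polynomial.coeff_divX, Polynomial.coeff_X_mul]

lemma X_mul_divX {p : R[X]} (h : (X : R[X]) ∣ p) : X * p.divX = p := by
  obtain ⟨c, rfl⟩ := h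
  rw [divX_X_mul]

lemma X_mul_cancel {p q : R[X]} (h : X * p = X * q) : p = q := by
  ext n
  have := congrArg (fun r => Polynomial.coeff r (n + 1)) h
  simpa [Polynomial.coeff_X_mul] using this

variable (R)

/-- The matrix underlying `conjP`. -/
noncomputable def conjMat (A : SL(2, R[X])) : Matrix (Fin 2) (Fin 2) R[X] :=
  !![A.1 0 0, X * A.1 0 1; (A.1 1 0).divX, A.1 1 1]

lemma conjMat_det {A : SL(2, R[X])} (hA : (X : R[X]) ∣ A.1 1 0) : (conjMat R A).det = 1 := by
  rw [conjMat, Matrix.det_fin_two_of]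
  have h : X * (A.1 1 0).divX = A.1 1 0 := X_mul_divX hA
  have hd : A.1 0 0 * A.1 1 1 - A.1 0 1 * A.1 1 0 = 1 := by
    rw [← Matrix.det_fin_two]; exact A.2
  calc A.1 0 0 * A.1 1 1 - X * A.1 0 1 * (A.1 1 0).divX
      = A.1 0 0 * A.1 1 1 - A.1 0 1 * (X * (A.1 1 0).divX) := by ring
    _ = 1 := by rw [h]; exact hd

lemma conjMat_mul {A B : SL(2, R[X])} (hA : (X : R[X]) ∣ A.1 1 0)
    (hB : (X : R[X]) ∣ B.1 1 0) :
    conjMat R (A * B) = conjMat R A * conjMat R B := by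
  have h00 : A.1 0 0 * B.1 0 0 + A.1 0 1 * B.1 1 0
      = A.1 0 0 * B.1 0 0 + (X * A.1 0 1) * (B.1 1 0).divX := by
    rw [show (X * A.1 0 1) * (B.1 1 0).divX = A.1 0 1 * (X * (B.1 1 0).divX) by ring,
      X_mul_divX hB]
  have h01 : X * (A.1 0 0 * B.1 0 1 + A.1 0 1 * B.1 1 1)
      = A.1 0 0 * (X * B.1 0 1) + (X * A.1 0 1) * B.1 1 1 := by ring
  have h10 : (A.1 1 0 * B.1 0 0 + A.1 1 1 * B.1 1 0).divX
      = (A.1 1 0).divX * B.1 0 0 + A.1 1 1 * (B.1 1 0).divX := by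
    apply X_mul_cancel
    rw [X_mul_divX (dvd_add (hA.mul_right _) (hB.mul_left _))]
    rw [mul_add,
      show X * ((A.1 1 0).divX * B.1 0 0) = (X * (A.1 1 0).divX) * B.1 0 0 by ring,
      X_mul_divX hA,
      show X * (A.1 1 1 * (B.1 1 0).divX) = A.1 1 1 * (X * (B.1 1 0).divX) by ring,
      X_mul_divX hB]
  have h11 : A.1 1 0 * B.1 0 1 + A.1 1 1 * B.1 1 1
      = (A.1 1 0).divX * (X * B.1 0 1) + A.1 1 1 * B.1 1 1 := by
    rw [show (A.1 1 0).divX * (X * B.1 0 1) = (X * (A.1 1 0).divX) * B.1 0 1 by ring,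
      X_mul_divX hA]
  rw [conjMat, conjMat, conjMat, entry00, entry01, entry10, entry11,
    Matrix.mul_fin_two, h10]
  rw [show (A.1 1 0 * B.1 0 1 + A.1 1 1 * B.1 1 1) = (A.1 1 0).divX * (X * B.1 0 1) + A.1 1 1 * B.1 1 1 from h11]
  rw [show (A.1 0 0 * B.1 0 0 + A.1 0 1 * B.1 1 0) = A.1 0 0 * B.1 0 0 + (X * A.1 0 1) * (B.1 1 0).divX from h00]
  rw [show X * (A.1 0 0 * B.1 0 1 + A.1 0 1 * B.1 1 1) = A.1 0 0 * (X * B.1 0 1) + (X * A.1 0 1) * B.1 1 1 from h01]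

/-- The second edge embedding `P → SL₂(R[t])`, conjugation by `diag(1,t)⁻¹` inside
`SL₂(R[t,t⁻¹])`: `(a, b; t·c, d) ↦ (a, t·b; c, d)`. -/
noncomputable def conjP : ↥(Psub R) →* SL(2, R[X]) where
  toFun A := ⟨conjMat R A.1, conjMat_det R A.2⟩
  map_one' := by
    apply Subtype.ext
    show conjMat R 1 = 1
    rw [conjMat]
    have h00 : ((1 : SL(2, R[X])) : Matrix (Fin 2) (Fin 2) R[X]) 0 0 = 1 := by
      rw [Matrix.SpecialLinearGroup.coe_one]; simp [Matrix.one_apply]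
    have h01 : ((1 : SL(2, R[X])) : Matrix (Fin 2) (Fin 2) R[X]) 0 1 = 0 := by
      rw [Matrix.SpecialLinearGroup.coe_one]; simp [Matrix.one_apply]
    have h10 : ((1 : SL(2, R[X])) : Matrix (Fin 2) (Fin 2) R[X]) 1 0 = 0 := by
      rw [Matrix.SpecialLinearGroup.coe_one]; simp [Matrix.one_apply]
    have h11 : ((1 : SL(2, R[X])) : Matrix (Fin 2) (Fin 2) R[X]) 1 1 = 1 := by
      rw [Matrix.SpecialLinearGroup.coe_one]; simp [Matrix.one_apply]
    rw [h00, h01, h10, h11, mul_zero, Polynomial.divX_zero, ← Matrix.one_fin_two]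
  map_mul' A B := by
    apply Subtype.ext
    show conjMat R (A.1 * B.1) = conjMat R A.1 * conjMat R B.1
    exact conjMat_mul R A.2 B.2

/-- The diagonal matrix `diag(1, t)` as a unit of the ring of 2×2 matrices over `R[t,t⁻¹]`. -/
noncomputable def DT : (Matrix (Fin 2) (Fin 2) (LaurentPolynomial R))ˣ where
  val := Matrix.diagonal ![1, LaurentPolynomial.T 1]
  inv := Matrix.diagonal ![1, LaurentPolynomial.T (-1)]
  val_inv := by
    rw [Matrix.diagonal_mul_diagonal]
    have : (fun i => (![1, LaurentPolynomial.T 1] : Fin 2 → LaurentPolynomial R) i *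
        ![1, LaurentPolynomial.T (-1)] i) = fun _ => (1 : LaurentPolynomial R) := by
      funext i
      fin_cases i
      · simp
      · show LaurentPolynomial.T 1 * LaurentPolynomial.T (-1) = 1
        rw [← LaurentPolynomial.T_add]; simp
    rw [this, Matrix.diagonal_one]
  inv_val := by
    rw [Matrix.diagonal_mul_diagonal]
    have : (fun i => (![1, LaurentPolynomial.T (-1)] : Fin 2 → LaurentPolynomial R) i *
        ![1, LaurentPolynomial.T 1] i) = fun _ => (1 : LaurentPolynomial R) := by
      funext i
      fin_cases i
      · simp
      · show LaurentPolynomial.T (-1) * LaurentPolynomial.T 1 = 1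
        rw [← LaurentPolynomial.T_add]; simp
    rw [this, Matrix.diagonal_one]

lemma DT_conj_det (M : Matrix (Fin 2) (Fin 2) (LaurentPolynomial R)) :
    (((DT R) : Matrix (Fin 2) (Fin 2) (LaurentPolynomial R)) * M * ((DT R)⁻¹).val).det = M.det := by
  rw [Matrix.det_mul, Matrix.det_mul]
  have h : ((DT R) : Matrix (Fin 2) (Fin 2) (LaurentPolynomial R)).det *
      ((DT R)⁻¹ : (Matrix (Fin 2) (Fin 2) (LaurentPolynomial R))ˣ).1.det = 1 := by
    rw [← Matrix.det_mul, Units.mul_inv, Matrix.det_one]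
  calc ((DT R) : Matrix (Fin 2) (Fin 2) (LaurentPolynomial R)).det * M.det * (((DT R)⁻¹).val).det
      = ((DT R) : Matrix (Fin 2) (Fin 2) (LaurentPolynomial R)).det * (((DT R)⁻¹).val).det * M.det := by ring
    _ = M.det := by rw [h, one_mul]

/-- The homomorphism `i₂ : SL₂(R[t]) → SL₂(R[t,t⁻¹])`, `A ↦ diag(1,t)·A·diag(1,t⁻¹)`. -/
noncomputable def i₂SL : SL(2, Polynomial R) →* SL(2, LaurentPolynomial R) where
  toFun A := ⟨(DT R : Matrix (Fin 2) (Fin 2) (LaurentPolynomial R)) *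
      A.1.map Polynomial.toLaurent * ↑(DT R)⁻¹, by
    rw [DT_conj_det]
    have : (A.1.map (Polynomial.toLaurent : R[X] → LaurentPolynomial R)).det
        = Polynomial.toLaurent A.1.det := by
      rw [← RingHom.mapMatrix_apply, ← RingHom.map_det]
    rw [this, A.2, _root_.map_one]⟩
  map_one' := by
    apply Subtype.ext
    show (DT R : Matrix (Fin 2) (Fin 2) (LaurentPolynomial R)) *
      ((1 : SL(2, R[X])).1.map Polynomial.toLaurent) * (↑(DT R)⁻¹ : Matrix (Fin 2) (Fin 2) (LaurentPolynomial R)) = 1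
    rw [Matrix.SpecialLinearGroup.coe_one]
    rw [show ((1 : Matrix (Fin 2) (Fin 2) R[X]).map (Polynomial.toLaurent : R[X] → _)) = 1 from
      Matrix.map_one _ (map_zero _) (map_one _)]
    rw [mul_one, Units.mul_inv]
  map_mul' A B := by
    apply Subtype.ext
    show (DT R : Matrix (Fin 2) (Fin 2) (LaurentPolynomial R)) *
        ((A * B).1.map Polynomial.toLaurent) * (↑(DT R)⁻¹ : Matrix (Fin 2) (Fin 2) (LaurentPolynomial R)) = _
    rw [Matrix.SpecialLinearGroup.coe_mul]
    rw [show ((A.1 * B.1).map (Polynomial.toLaurent : R[X] → _))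
        = A.1.map Polynomial.toLaurent * B.1.map Polynomial.toLaurent from
      Matrix.map_mul]
    show _ = ((DT R : Matrix (Fin 2) (Fin 2) (LaurentPolynomial R)) *
        A.1.map Polynomial.toLaurent * (↑(DT R)⁻¹ : Matrix (Fin 2) (Fin 2) (LaurentPolynomial R))) *
      ((DT R : Matrix (Fin 2) (Fin 2) (LaurentPolynomial R)) *
        B.1.map Polynomial.toLaurent * (↑(DT R)⁻¹ : Matrix (Fin 2) (Fin 2) (LaurentPolynomial R)))
    simp only [mul_assoc, Units.inv_mul_cancel_left]

end Paper

namespace Paper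

/-- The inclusion `SL₂(ℚ[t]) → SL₂(ℚ[t,t⁻¹])`. -/
noncomputable def jQ : SL(2, Polynomial ℚ) →* SL(2, LaurentPolynomial ℚ) :=
  Matrix.SpecialLinearGroup.map (Polynomial.toLaurent : Polynomial ℚ →+* LaurentPolynomial ℚ)

/-- The inclusion `SL₂(ℤ[t]) → SL₂(ℚ[t])`. -/
noncomputable def ZXtoQX : SL(2, Polynomial ℤ) →* SL(2, Polynomial ℚ) :=
  Matrix.SpecialLinearGroup.map (Polynomial.mapRingHom (Int.castRingHom ℚ))

/-- The inclusion `SL₂(ℤ[t]) → SL₂(ℚ[t,t⁻¹])`. -/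
noncomputable def jZ : SL(2, Polynomial ℤ) →* SL(2, LaurentPolynomial ℚ) :=
  jQ.comp ZXtoQX

end Paper

theorem Polynomial.map_divX {R S : Type*} [Semiring R] [Semiring S] (f : R →+* S) (p : R[X]) :
    p.divX.map f = (p.map f).divX := by
  ext n
  simp only [coeff_map, coeff_divX]

theorem Polynomial.X_dvd_map_iff {R S : Type*} [Semiring R] [Semiring S] {f : R →+* S}
    (hf : Function.Injective f) {p : R[X]} : X ∣ p.map f ↔ X ∣ p := by
  simp only [X_dvd_iff, coeff_map, map_eq_zero_iff f hf]

theorem Polynomial.toLaurent_eq_T_one_mul_iff {R : Type*} [Semiring R] {p q : R[X]} :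
    toLaurent p = T 1 * toLaurent q ↔ p = X * q := by
  rw [← toLaurent_X, ← map_mul, toLaurent_inj]

theorem Polynomial.toLaurent_mul_T_neg_one_eq_iff {R : Type*} [Semiring R] {p q : R[X]} :
    toLaurent p * T (-1) = toLaurent q ↔ p = X * q := by
  rw [← toLaurent_eq_T_one_mul_iff]
  constructor <;> intro h
  · rw [← h, ← mul_assoc, T_mul, mul_assoc, ← T_add, add_neg_cancel, T_zero, mul_one]
  · rw [h, T_mul, mul_assoc, ← T_add, add_neg_cancel, T_zero, mul_one]

namespace Matrix.SpecialLinearGroup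

variable {n R S : Type*} [Fintype n] [DecidableEq n] [CommRing R] [CommRing S] {f : R →+* S}

theorem map_injective (hf : Function.Injective f) :
    Function.Injective (map (n := n) f) := fun _ _ h =>
  Subtype.ext <| Matrix.map_injective hf (congrArg Subtype.val h)

theorem mem_range_map_of_forall_mem_range (hf : Function.Injective f)
    (B : SpecialLinearGroup n S) (hB : ∀ i j, B i j ∈ f.range) : B ∈ (map (n := n) f).range := by
  choose A hA using hB
  have hmap : (of A).map f = B := Matrix.ext hA
  have hdet : (of A).det = 1 := hf <| by
    rw [RingHom.map_det, RingHom.mapMatrix_apply, hmap, B.2, map_one]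
  exact ⟨⟨of A, hdet⟩, Subtype.ext hmap⟩

end Matrix.SpecialLinearGroup

namespace Paper

section

variable {R S : Type} [CommRing R] [CommRing S]

theorem i₂SL_coe (A : SL(2, R[X])) :
    ((i₂SL R A) : Matrix (Fin 2) (Fin 2) R[T;T⁻¹]) =
      !![toLaurent (A 0 0), toLaurent (A 0 1) * T (-1);
         T 1 * toLaurent (A 1 0), toLaurent (A 1 1)] := by
  show diagonal ![1, T 1] * A.1.map toLaurent * diagonal ![1, T (-1)] = _
  ext i j
  fin_cases i <;> fin_cases j <;> simp [Matrix.mul_apply, diagonal]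

theorem i₂SL_eq_map_toLaurent_iff {A B : SL(2, R[X])} :
    i₂SL R A = Matrix.SpecialLinearGroup.map toLaurent B ↔
      A 0 0 = B 0 0 ∧ A 0 1 = X * B 0 1 ∧ X * A 1 0 = B 1 0 ∧ A 1 1 = B 1 1 := by
  simp only [Matrix.SpecialLinearGroup.ext_iff, Fin.forall_fin_two, i₂SL_coe,
    Matrix.SpecialLinearGroup.map_apply_coe, RingHom.mapMatrix_apply, map_apply, of_apply,
    cons_val', cons_val_zero, cons_val_one, empty_val', cons_val_fin_one,
    toLaurent_mul_T_neg_one_eq_iff, ← toLaurent_X, ← map_mul, toLaurent_inj, and_assoc]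

theorem mem_range_map_of_i₂SL_eq {f : R →+* S} (hf : Function.Injective f) {A : SL(2, R[X])}
    {B : SL(2, S[X])}
    (h : i₂SL S (Matrix.SpecialLinearGroup.map (mapRingHom f) A) =
      Matrix.SpecialLinearGroup.map toLaurent B) :
    B ∈ (Matrix.SpecialLinearGroup.map (mapRingHom f)).range := by
  obtain ⟨h00, h01, h10, h11⟩ := i₂SL_eq_map_toLaurent_iff.1 h
  refine Matrix.SpecialLinearGroup.mem_range_map_of_forall_mem_range (map_injective f hf) B ?_
  simp only [Fin.forall_fin_two]
  refine ⟨⟨⟨A 0 0, h00⟩, ⟨(A 0 1).divX, ?_⟩⟩, ⟨X * A 1 0, ?_⟩, ⟨A 1 1, h11⟩⟩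
  · rw [coe_mapRingHom, map_divX]
    exact (congrArg divX h01).trans (divX_X_mul _)
  · rw [coe_mapRingHom, Polynomial.map_mul, map_X]
    exact h10

theorem comap_mapRingHom_Psub {f : R →+* S} (hf : Function.Injective f) :
    (Psub S).comap (Matrix.SpecialLinearGroup.map (mapRingHom f)) = Psub R := by
  ext A
  exact X_dvd_map_iff hf

end

theorem range_jZ_inf_map_Psub : jZ.range ⊓ (Psub ℚ).map jQ = (Psub ℤ).map jZ := by
  have hjQ : Function.Injective jQ := Matrix.SpecialLinearGroup.map_injective toLaurent_injective
  rw [← comap_mapRingHom_Psub (RingHom.injective_int (Int.castRingHom ℚ))]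
  change _ = ((Psub ℚ).comap ZXtoQX).map (jQ.comp ZXtoQX)
  rw [← Subgroup.map_map, Subgroup.map_comap_eq, Subgroup.map_inf_eq _ _ _ hjQ,
    MonoidHom.map_range, jZ]

theorem map_Psub_jZ_le_range_i₂SL : (Psub ℤ).map jZ ≤ ((i₂SL ℚ).comp ZXtoQX).range := by
  rintro _ ⟨A, hA, rfl⟩
  refine ⟨conjP ℤ ⟨A, hA⟩, i₂SL_eq_map_toLaurent_iff.2 ⟨rfl, ?_, ?_, rfl⟩⟩
  · show (X * A 0 1).map _ = X * (A 0 1).map _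
    rw [Polynomial.map_mul, map_X]
  · show X * (A 1 0).divX.map _ = (A 1 0).map _
    rw [← map_X (Int.castRingHom ℚ), ← Polynomial.map_mul, X_mul_divX hA]

theorem range_i₂SL_inf_map_Psub_le_range_jZ :
    ((i₂SL ℚ).comp ZXtoQX).range ⊓ (Psub ℚ).map jQ ≤ jZ.range := by
  rintro _ ⟨⟨A, rfl⟩, B, -, hB⟩
  obtain ⟨A', rfl⟩ :=
    mem_range_map_of_i₂SL_eq (RingHom.injective_int (Int.castRingHom ℚ)) hB.symm
  exact ⟨A', hB⟩

end Paper

open Paper in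
/-- Inside `SL₂(ℚ[t,t⁻¹])`, one has `SL₂(ℤ[t]) ∩ Γ(ℚ) = i₂(SL₂(ℤ[t])) ∩ Γ(ℚ)`, and this common
subgroup is the image of `P`, the subgroup of matrices of `SL₂(ℤ[t])` whose lower-left entry is
divisible by `t`. -/
theorem intersection_SL2Zt_Gamma :
    (jZ.range ⊓ (Psub ℚ).map jQ
        = ((i₂SL ℚ).comp ZXtoQX).range ⊓ (Psub ℚ).map jQ)
    ∧ jZ.range ⊓ (Psub ℚ).map jQ = (Psub ℤ).map jZ := by
  have hP : jZ.range ⊓ (Psub ℚ).map jQ = (Psub ℤ).map jZ := range_jZ_inf_map_Psub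
  refine ⟨le_antisymm ?_ (le_inf range_i₂SL_inf_map_Psub_le_range_jZ inf_le_right), hP⟩
  exact le_inf (hP ▸ map_Psub_jZ_le_range_i₂SL) inf_le_right
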